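/- For any coalgebra morphism α : C → D over a field K, the corestriction functor α^* : M^C → M^D (sending a right C-comodule (M, ρ) to M with coaction (id_M ⊗ α) ∘ ρ) is left adjoint to the coinduction functor α_* : M^D → M^C given by N ↦ N □_D C, the cotensor product over D. -/

import Mathlib

open TensorProduct CategoryTheory CategoryTheory.Limits

universe u

set_option maxHeartbeats 1000000
noncomputable section

namespace Formal

variable (K : Type u) [Field K]

structure Comod (C : Type u) [AddCommGroup C] [Module K C] [Coalgebra K C] :
    Type (u + 1) where
  carrier : Type u
  [acg : AddCommGroup carrier]
  [mod : Module K carrier]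
  ρ : carrier →ₗ[K] carrier ⊗[K] C
  counit_comp' :
    (TensorProduct.rid K carrier).toLinearMap ∘ₗ
      LinearMap.lTensor carrier (Coalgebra.counit (R := K) (A := C)) ∘ₗ ρ = LinearMap.id
  coassoc' :
    (TensorProduct.assoc K carrier C C).toLinearMap ∘ₗ LinearMap.rTensor C ρ ∘ₗ ρ =
      LinearMap.lTensor carrier (Coalgebra.comul (R := K) (A := C)) ∘ₗ ρ

attribute [instance] Comod.acg Comod.mod

variable {K}
variable {C D E : Type u}
  [AddCommGroup C] [Module K C] [Coalgebra K C]
  [AddCommGroup D] [Module K D] [Coalgebra K D]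
  [AddCommGroup E] [Module K E] [Coalgebra K E]

@[ext]
structure ComodHom (M N : Comod K C) : Type u where
  f : M.carrier →ₗ[K] N.carrier
  compat : N.ρ ∘ₗ f = LinearMap.rTensor C f ∘ₗ M.ρ

instance : Category (Comod K C) where
  Hom := ComodHom
  id M := ⟨LinearMap.id, by rw [LinearMap.comp_id, LinearMap.rTensor_id, LinearMap.id_comp]⟩
  comp {M N P} g h :=
    ⟨h.f ∘ₗ g.f, by
      rw [← LinearMap.comp_assoc, h.compat, LinearMap.comp_assoc, g.compat,
        ← LinearMap.comp_assoc, ← LinearMap.rTensor_comp]⟩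
  id_comp f := by apply ComodHom.ext; exact LinearMap.comp_id _
  comp_id f := by apply ComodHom.ext; exact LinearMap.id_comp _
  assoc f g h := by apply ComodHom.ext; exact (LinearMap.comp_assoc _ _ _).symm

@[simp] lemma ComodHom.id_f (M : Comod K C) : (𝟙 M : M ⟶ M).f = LinearMap.id := rfl

@[simp] lemma ComodHom.comp_f {M N P : Comod K C} (g : M ⟶ N) (h : N ⟶ P) :
    (g ≫ h).f = h.f ∘ₗ g.f := rfl

section Cores

variable (α : C →ₗc[K] D) (M : Comod K C)

/-- The coaction of the corestricted comodule. -/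
def coresρ : M.carrier →ₗ[K] M.carrier ⊗[K] D :=
  LinearMap.lTensor M.carrier α.toLinearMap ∘ₗ M.ρ

lemma cores_counit :
    (TensorProduct.rid K M.carrier).toLinearMap ∘ₗ
      LinearMap.lTensor M.carrier (Coalgebra.counit (R := K) (A := D)) ∘ₗ coresρ α M =
      LinearMap.id := by
  rw [coresρ, ← LinearMap.comp_assoc M.ρ, ← LinearMap.lTensor_comp, α.counit_comp]
  exact M.counit_comp'

lemma cores_coassoc :
    (TensorProduct.assoc K M.carrier D D).toLinearMap ∘ₗ
      LinearMap.rTensor D (coresρ α M) ∘ₗ coresρ α M =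
      LinearMap.lTensor M.carrier (Coalgebra.comul (R := K) (A := D)) ∘ₗ coresρ α M := by
  set A := α.toLinearMap
  have h1 : LinearMap.rTensor D (coresρ α M) ∘ₗ coresρ α M =
      (TensorProduct.map (LinearMap.lTensor M.carrier A) A ∘ₗ LinearMap.rTensor C M.ρ) ∘ₗ M.ρ := by
    rw [LinearMap.map_comp_rTensor]
    rw [coresρ, ← LinearMap.comp_assoc M.ρ, LinearMap.rTensor_comp_lTensor]
  have h2 : (TensorProduct.assoc K M.carrier D D).toLinearMap ∘ₗ
      TensorProduct.map (LinearMap.lTensor M.carrier A) A =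
      LinearMap.lTensor M.carrier (TensorProduct.map A A) ∘ₗ
        (TensorProduct.assoc K M.carrier C C).toLinearMap := by
    have := TensorProduct.map_map_comp_assoc_eq (R := K)
      (f := (LinearMap.id : M.carrier →ₗ[K] M.carrier)) (g := A) (h := A)
    calc (TensorProduct.assoc K M.carrier D D).toLinearMap ∘ₗ
        TensorProduct.map (LinearMap.lTensor M.carrier A) A
        = (TensorProduct.assoc K M.carrier D D).toLinearMap ∘ₗ
            TensorProduct.map (TensorProduct.map LinearMap.id A) A := rfl
      _ = TensorProduct.map LinearMap.id (TensorProduct.map A A) ∘ₗ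
            (TensorProduct.assoc K M.carrier C C).toLinearMap := this.symm
      _ = LinearMap.lTensor M.carrier (TensorProduct.map A A) ∘ₗ
            (TensorProduct.assoc K M.carrier C C).toLinearMap := rfl
  conv_lhs => rw [h1]
  simp only [← LinearMap.comp_assoc]
  rw [h2]
  simp only [LinearMap.comp_assoc]
  rw [M.coassoc', ← LinearMap.comp_assoc, ← LinearMap.lTensor_comp, α.map_comp_comul,
    LinearMap.lTensor_comp, LinearMap.comp_assoc]
  rfl

/-- Corestriction of scalars along a coalgebra morphism, as a functor. -/
def cores : Comod K C ⥤ Comod K D where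
  obj M :=
    { carrier := M.carrier
      ρ := coresρ α M
      counit_comp' := cores_counit α M
      coassoc' := cores_coassoc α M }
  map {M N} f := ⟨f.f, by
    show coresρ α N ∘ₗ f.f = LinearMap.rTensor D f.f ∘ₗ coresρ α M
    rw [coresρ, coresρ, LinearMap.comp_assoc, f.compat, ← LinearMap.comp_assoc,
      ← LinearMap.comp_assoc, LinearMap.lTensor_comp_rTensor, LinearMap.rTensor_comp_lTensor]⟩
  map_id M := by apply ComodHom.ext; rfl
  map_comp f g := by apply ComodHom.ext; rfl

@[simp] lemma cores_obj_carrier (M : Comod K C) : ((cores α).obj M).carrier = M.carrier := rfl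
@[simp] lemma cores_map_f {M N : Comod K C} (f : M ⟶ N) : ((cores α).map f).f = f.f := rfl

end Cores

/-- The left coaction of `C` as a left `D`-comodule via `α`. -/
def lcoaction (α : C →ₗc[K] D) : C →ₗ[K] D ⊗[K] C :=
  LinearMap.rTensor C α.toLinearMap ∘ₗ Coalgebra.comul

/-- The cotensor product `N □_D C` as a submodule of `N ⊗ C`. -/
def cotensor (α : C →ₗc[K] D) (N : Comod K D) : Submodule K (N.carrier ⊗[K] C) :=
  LinearMap.ker
    ((TensorProduct.assoc K N.carrier D C).toLinearMap ∘ₗ LinearMap.rTensor C N.ρ -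
      LinearMap.lTensor N.carrier (lcoaction α))


section Rep

variable {X : Type u} [SmallCategory X]
variable (K)
variable (Cx : X → Type u) [∀ x, AddCommGroup (Cx x)] [∀ x, Module K (Cx x)]
  [∀ x, Coalgebra K (Cx x)]
variable (F : ∀ {x y : X}, (x ⟶ y) → (Cx x →ₗc[K] Cx y))

/-- A cis-comodule over a coalgebra representation. -/
structure Cis : Type (u + 1) where
  M : ∀ x, Comod K (Cx x)
  str : ∀ {x y : X} (a : x ⟶ y), (cores (F a)).obj (M x) ⟶ M y
  str_id : ∀ x, (str (𝟙 x)).f = LinearMap.id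
  str_comp : ∀ {x y z : X} (a : x ⟶ y) (b : y ⟶ z),
    (str (a ≫ b)).f = (str b).f ∘ₗ (str a).f

/-- A trans-comodule over a coalgebra representation (via the corestriction-side
structure maps `_αM : M_y → α^* M_x` for `α : x ⟶ y`). -/
structure Trans : Type (u + 1) where
  M : ∀ x, Comod K (Cx x)
  str : ∀ {x y : X} (a : x ⟶ y), M y ⟶ (cores (F a)).obj (M x)
  str_id : ∀ x, (str (𝟙 x)).f = LinearMap.id
  str_comp : ∀ {x y z : X} (a : x ⟶ y) (b : y ⟶ z),
    (str (a ≫ b)).f = (str a).f ∘ₗ (str b).f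

variable {K Cx F}

@[ext]
structure CisHom (P Q : Cis K Cx (F := @F)) : Type u where
  η : ∀ x, P.M x ⟶ Q.M x
  nat : ∀ {x y : X} (a : x ⟶ y), (η y).f ∘ₗ (P.str a).f = (Q.str a).f ∘ₗ (η x).f

@[ext]
structure TransHom (P Q : Trans K Cx (F := @F)) : Type u where
  η : ∀ x, P.M x ⟶ Q.M x
  nat : ∀ {x y : X} (a : x ⟶ y), (η x).f ∘ₗ (P.str a).f = (Q.str a).f ∘ₗ (η y).f

instance : Category (Cis K Cx (F := @F)) where
  Hom := CisHom
  id P := ⟨fun x => 𝟙 (P.M x), fun a => by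
    simp only [ComodHom.id_f, LinearMap.id_comp, LinearMap.comp_id]
    exact LinearMap.ext fun _ => rfl⟩
  comp g h := ⟨fun x => g.η x ≫ h.η x, fun {x y} a => by
    simp only [ComodHom.comp_f]
    exact LinearMap.ext fun m =>
      (congrArg (h.η y).f (LinearMap.congr_fun (g.nat a) m)).trans
        (LinearMap.congr_fun (h.nat a) ((g.η x).f m))⟩
  id_comp f := by apply CisHom.ext; funext x; exact Category.id_comp _
  comp_id f := by apply CisHom.ext; funext x; exact Category.comp_id _
  assoc f g h := by apply CisHom.ext; funext x; exact Category.assoc _ _ _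

instance : Category (Trans K Cx (F := @F)) where
  Hom := TransHom
  id P := ⟨fun x => 𝟙 (P.M x), fun a => by
    simp only [ComodHom.id_f, LinearMap.id_comp, LinearMap.comp_id]
    exact LinearMap.ext fun _ => rfl⟩
  comp g h := ⟨fun x => g.η x ≫ h.η x, fun {x y} a => by
    simp only [ComodHom.comp_f]
    exact LinearMap.ext fun m =>
      (congrArg (h.η x).f (LinearMap.congr_fun (g.nat a) m)).trans
        (LinearMap.congr_fun (h.nat a) ((g.η y).f m))⟩
  id_comp f := by apply TransHom.ext; funext x; exact Category.id_comp _
  comp_id f := by apply TransHom.ext; funext x; exact Category.comp_id _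
  assoc f g h := by apply TransHom.ext; funext x; exact Category.assoc _ _ _

@[simp] lemma CisHom.id_η (P : Cis K Cx (F := @F)) (x : X) :
    (𝟙 P : P ⟶ P).η x = 𝟙 (P.M x) := rfl

@[simp] lemma CisHom.comp_η {P Q R : Cis K Cx (F := @F)} (g : P ⟶ Q) (h : Q ⟶ R) (x : X) :
    (g ≫ h).η x = g.η x ≫ h.η x := rfl

@[simp] lemma TransHom.id_η (P : Trans K Cx (F := @F)) (x : X) :
    (𝟙 P : P ⟶ P).η x = 𝟙 (P.M x) := rfl

@[simp] lemma TransHom.comp_η {P Q R : Trans K Cx (F := @F)} (g : P ⟶ Q) (h : Q ⟶ R) (x : X) :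
    (g ≫ h).η x = g.η x ≫ h.η x := rfl

variable (K Cx F)

/-- Evaluation of cis-comodules at an object. -/
def evCis (x : X) : Cis K Cx (F := @F) ⥤ Comod K (Cx x) where
  obj P := P.M x
  map g := g.η x
  map_id _ := rfl
  map_comp _ _ := rfl

/-- Evaluation of trans-comodules at an object. -/
def evTrans (x : X) : Trans K Cx (F := @F) ⥤ Comod K (Cx x) where
  obj P := P.M x
  map g := g.η x
  map_id _ := rfl
  map_comp _ _ := rfl

end Rep

end Formal
end

namespace Formal

noncomputable section Aux

open Coalgebra LinearMap

variable {K : Type u} [Field K] {C D : Type u}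
  [AddCommGroup C] [Module K C] [Coalgebra K C]
  [AddCommGroup D] [Module K D] [Coalgebra K D]
  (α : C →ₗc[K] D)

/-- generic lemmas -/
lemma sub_ext {A M : Type u} [AddCommGroup A] [Module K A] [AddCommGroup M] [Module K M]
    {p : Submodule K M} {f g : A →ₗ[K] ↥p}
    (h : p.subtype ∘ₗ f = p.subtype ∘ₗ g) : f = g := by
  ext a
  have h2 := LinearMap.congr_fun h a
  simp only [LinearMap.comp_apply, Submodule.subtype_apply] at h2
  exact h2

lemma rTensor_subtype_injective {M V : Type u} [AddCommGroup M] [Module K M]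
    [AddCommGroup V] [Module K V] (p : Submodule K M) :
    Function.Injective (LinearMap.rTensor V p.subtype) :=
  Module.Flat.rTensor_preserves_injective_linearMap _ p.injective_subtype

lemma rTensor_sub_ext {A M V : Type u} [AddCommGroup A] [Module K A] [AddCommGroup M]
    [Module K M] [AddCommGroup V] [Module K V]
    {p : Submodule K M} {f g : A →ₗ[K] ↥p ⊗[K] V}
    (h : LinearMap.rTensor V p.subtype ∘ₗ f = LinearMap.rTensor V p.subtype ∘ₗ g) : f = g := by
  ext a; exact rTensor_subtype_injective p (LinearMap.congr_fun h a)

lemma range_rTensor_subtype {M M' V : Type u} [AddCommGroup M] [Module K M]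
    [AddCommGroup M'] [Module K M'] [AddCommGroup V] [Module K V] (f : M →ₗ[K] M') :
    LinearMap.range (LinearMap.rTensor V (LinearMap.ker f).subtype) =
      LinearMap.ker (LinearMap.rTensor V f) :=
  ((Module.Flat.iff_rTensor_exact.mp (inferInstance : Module.Flat K V))
    (LinearMap.exact_subtype_ker_map f)).linearMap_ker_eq.symm

lemma assoc_rTensor_rTensor {A A' B V : Type u} [AddCommGroup A] [Module K A]
    [AddCommGroup A'] [Module K A'] [AddCommGroup B] [Module K B]
    [AddCommGroup V] [Module K V] (f : A →ₗ[K] A') :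
    (TensorProduct.assoc K A' B V).toLinearMap ∘ₗ
        LinearMap.rTensor V (LinearMap.rTensor B f) =
      LinearMap.rTensor (B ⊗[K] V) f ∘ₗ (TensorProduct.assoc K A B V).toLinearMap := by
  apply TensorProduct.ext_threefold
  intro a b v
  simp

lemma assoc_rTensor_lTensor {A B B' V : Type u} [AddCommGroup A] [Module K A]
    [AddCommGroup B] [Module K B] [AddCommGroup B'] [Module K B']
    [AddCommGroup V] [Module K V] (g : B →ₗ[K] B') :
    (TensorProduct.assoc K A B' V).toLinearMap ∘ₗ
        LinearMap.rTensor V (LinearMap.lTensor A g) =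
      LinearMap.lTensor A (LinearMap.rTensor V g) ∘ₗ (TensorProduct.assoc K A B V).toLinearMap := by
  apply TensorProduct.ext_threefold
  intro a b v
  simp

lemma rid_natural {A A' : Type u} [AddCommGroup A] [Module K A]
    [AddCommGroup A'] [Module K A'] (f : A →ₗ[K] A') :
    f ∘ₗ (TensorProduct.rid K A).toLinearMap =
      (TensorProduct.rid K A').toLinearMap ∘ₗ LinearMap.rTensor K f := by
  apply TensorProduct.ext'
  intro a s
  simp

lemma rTensor_sub_apply {A B V : Type u} [AddCommGroup A] [Module K A]
    [AddCommGroup B] [Module K B] [AddCommGroup V] [Module K V]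
    (f g : A →ₗ[K] B) (x : A ⊗[K] V) :
    LinearMap.rTensor V (f - g) x =
      LinearMap.rTensor V f x - LinearMap.rTensor V g x := by
  induction x using TensorProduct.induction_on with
  | zero => simp
  | tmul a v => simp [TensorProduct.sub_tmul]
  | add x y hx hy => rw [map_add, map_add, map_add, hx, hy]; abel

/-- The map whose kernel is the cotensor product. -/
def theta (N : Comod K D) : N.carrier ⊗[K] C →ₗ[K] N.carrier ⊗[K] (D ⊗[K] C) :=
  (TensorProduct.assoc K N.carrier D C).toLinearMap ∘ₗ LinearMap.rTensor C N.ρ -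
    LinearMap.lTensor N.carrier (lcoaction α)

lemma cotensor_eq_ker (N : Comod K D) : cotensor α N = LinearMap.ker (theta α N) := rfl

lemma theta_comp_subtype (N : Comod K D) :
    theta α N ∘ₗ (cotensor α N).subtype = 0 := by
  ext v
  exact v.2

lemma T1_subtype_eq_T2 (N : Comod K D) :
    ((TensorProduct.assoc K N.carrier D C).toLinearMap ∘ₗ LinearMap.rTensor C N.ρ) ∘ₗ
        (cotensor α N).subtype =
      LinearMap.lTensor N.carrier (lcoaction α) ∘ₗ (cotensor α N).subtype := by
  have h := theta_comp_subtype α N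
  rw [theta, LinearMap.sub_comp] at h
  exact sub_eq_zero.mp h

/-- The candidate coaction on `N ⊗ C`, before restriction to the cotensor product. -/
def Psi (N : Comod K D) : N.carrier ⊗[K] C →ₗ[K] (N.carrier ⊗[K] C) ⊗[K] C :=
  (TensorProduct.assoc K N.carrier C C).symm.toLinearMap ∘ₗ
    LinearMap.lTensor N.carrier (Coalgebra.comul (R := K) (A := C))

lemma Psi_tmul (N : Comod K D) (n : N.carrier) (c : C) (r : Coalgebra.Repr K c (C × C)) :
    Psi N (n ⊗ₜ[K] c) = ∑ i ∈ r.index, (n ⊗ₜ[K] r.left i) ⊗ₜ[K] r.right i := by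
  simp only [Psi, LinearMap.comp_apply, LinearMap.lTensor_tmul, LinearEquiv.coe_coe]
  rw [← r.eq, TensorProduct.tmul_sum, map_sum]
  simp

/-- comparison map used to show `Psi` descends to the cotensor product. -/
def Phi (N : Comod K D) :
    N.carrier ⊗[K] (D ⊗[K] C) →ₗ[K] (N.carrier ⊗[K] (D ⊗[K] C)) ⊗[K] C :=
  (TensorProduct.assoc K N.carrier (D ⊗[K] C) C).symm.toLinearMap ∘ₗ
    LinearMap.lTensor N.carrier
      ((TensorProduct.assoc K D C C).symm.toLinearMap ∘ₗ
        LinearMap.lTensor D (Coalgebra.comul (R := K) (A := C)))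

lemma rTensor_theta_comp_Psi (N : Comod K D) :
    LinearMap.rTensor C (theta α N) ∘ₗ Psi N = Phi N ∘ₗ theta α N := by
  have hA1 : LinearMap.rTensor C
        ((TensorProduct.assoc K N.carrier D C).toLinearMap ∘ₗ LinearMap.rTensor C N.ρ) ∘ₗ
          Psi N =
      Phi N ∘ₗ
        ((TensorProduct.assoc K N.carrier D C).toLinearMap ∘ₗ LinearMap.rTensor C N.ρ) := by
    apply TensorProduct.ext'
    intro n c
    have r := ℛ K c
    simp only [LinearMap.comp_apply, Psi_tmul N n c r, map_sum, LinearMap.rTensor_tmul,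
      LinearMap.comp_apply, LinearEquiv.coe_coe, TensorProduct.assoc_tmul]
    generalize N.ρ n = s
    induction s using TensorProduct.induction_on with
    | zero => simp
    | tmul a b =>
        simp only [TensorProduct.assoc_tmul, Phi, LinearMap.comp_apply,
          LinearMap.lTensor_tmul, LinearEquiv.coe_coe]
        rw [← r.eq, TensorProduct.tmul_sum, map_sum, TensorProduct.tmul_sum, map_sum]
        simp
    | add s t hs ht =>
        simp only [TensorProduct.add_tmul, map_add, Finset.sum_add_distrib, hs, ht]
  have hA2 : LinearMap.rTensor C (LinearMap.lTensor N.carrier (lcoaction α)) ∘ₗ Psi N =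
      Phi N ∘ₗ LinearMap.lTensor N.carrier (lcoaction α) := by
    apply TensorProduct.ext'
    intro n c
    have r := ℛ K c
    have r1 : ∀ i, Coalgebra.Repr K (r.left i) (C × C) := fun i => ℛ K (r.left i)
    have r2 : ∀ i, Coalgebra.Repr K (r.right i) (C × C) := fun i => ℛ K (r.right i)
    have key := congrArg
      (LinearMap.rTensor C
          ((TensorProduct.mk K N.carrier (D ⊗[K] C) n) ∘ₗ
            LinearMap.rTensor C α.toLinearMap) ∘ₗ
        (TensorProduct.assoc K C C C).symm.toLinearMap)
      (Coalgebra.sum_tmul_tmul_eq r r1 r2)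
    simp only [map_sum, LinearMap.comp_apply, LinearEquiv.coe_coe,
      TensorProduct.assoc_symm_tmul, LinearMap.rTensor_tmul, TensorProduct.mk_apply] at key
    -- LHS
    simp only [LinearMap.comp_apply, Psi_tmul N n c r, map_sum, LinearMap.rTensor_tmul,
      LinearMap.lTensor_tmul]
    have hlcoact : ∀ i, lcoaction α (r.left i) =
        ∑ j ∈ (r1 i).index, α.toLinearMap ((r1 i).left j) ⊗ₜ[K] (r1 i).right j := by
      intro i
      rw [lcoaction, LinearMap.comp_apply, ← (r1 i).eq, map_sum]
      simp
    have hlhs : ∑ i ∈ r.index, (n ⊗ₜ[K] lcoaction α (r.left i)) ⊗ₜ[K] r.right i =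
        ∑ i ∈ r.index, ∑ j ∈ (r1 i).index,
          (n ⊗ₜ[K] (α.toLinearMap ((r1 i).left j) ⊗ₜ[K] (r1 i).right j)) ⊗ₜ[K] r.right i := by
      refine Finset.sum_congr rfl fun i _ => ?_
      rw [hlcoact i, TensorProduct.tmul_sum, TensorProduct.sum_tmul]
    rw [hlhs, key]
    -- RHS
    rw [lcoaction, LinearMap.comp_apply, ← r.eq, map_sum]
    simp only [LinearMap.rTensor_tmul, TensorProduct.tmul_sum, map_sum, Phi,
      LinearMap.comp_apply, LinearMap.lTensor_tmul, LinearEquiv.coe_coe]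
    refine Finset.sum_congr rfl fun i _ => ?_
    rw [← (r2 i).eq, TensorProduct.tmul_sum, map_sum, TensorProduct.tmul_sum, map_sum]
    simp
  apply LinearMap.ext
  intro w
  have h1 := LinearMap.congr_fun hA1 w
  have h2 := LinearMap.congr_fun hA2 w
  simp only [LinearMap.comp_apply] at h1 h2
  show LinearMap.rTensor C (theta α N) (Psi N w) = Phi N (theta α N w)
  calc LinearMap.rTensor C (theta α N) (Psi N w)
      = LinearMap.rTensor C ((TensorProduct.assoc K N.carrier D C).toLinearMap ∘ₗ
            LinearMap.rTensor C N.ρ) (Psi N w) -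
          LinearMap.rTensor C (LinearMap.lTensor N.carrier (lcoaction α)) (Psi N w) :=
        rTensor_sub_apply _ _ _
    _ = Phi N ((TensorProduct.assoc K N.carrier D C)
            (LinearMap.rTensor C N.ρ w)) -
          Phi N (LinearMap.lTensor N.carrier (lcoaction α) w) := by
        rw [h1, h2]; exact rfl
    _ = Phi N ((TensorProduct.assoc K N.carrier D C) (LinearMap.rTensor C N.ρ w) -
          LinearMap.lTensor N.carrier (lcoaction α) w) := (map_sub (Phi N) _ _).symm
    _ = Phi N (theta α N w) := rfl

lemma Psi_subtype_mem (N : Comod K D) (v : ↥(cotensor α N)) :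
    Psi N ((cotensor α N).subtype v) ∈
      LinearMap.range (LinearMap.rTensor C (cotensor α N).subtype) := by
  have hrange : LinearMap.range (LinearMap.rTensor C (cotensor α N).subtype) =
      LinearMap.ker (LinearMap.rTensor C (theta α N)) := by
    rw [cotensor_eq_ker]
    exact range_rTensor_subtype (theta α N)
  rw [hrange, LinearMap.mem_ker]
  have h := LinearMap.congr_fun (rTensor_theta_comp_Psi α N) ((cotensor α N).subtype v)
  simp only [LinearMap.comp_apply] at h
  rw [h]
  have hv : theta α N ((cotensor α N).subtype v) = 0 := v.2
  rw [hv, map_zero]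

/-- The coaction on the cotensor product. -/
def coindRho (N : Comod K D) : ↥(cotensor α N) →ₗ[K] ↥(cotensor α N) ⊗[K] C :=
  (LinearEquiv.ofInjective (LinearMap.rTensor C (cotensor α N).subtype)
      (rTensor_subtype_injective _)).symm.toLinearMap ∘ₗ
    LinearMap.codRestrict _ (Psi N ∘ₗ (cotensor α N).subtype) (Psi_subtype_mem α N)

lemma rTensor_subtype_coindRho (N : Comod K D) :
    LinearMap.rTensor C (cotensor α N).subtype ∘ₗ coindRho α N =
      Psi N ∘ₗ (cotensor α N).subtype := by
  ext v
  set j := LinearMap.rTensor C (cotensor α N).subtype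
  set e := LinearEquiv.ofInjective j (rTensor_subtype_injective (cotensor α N))
  have h1 : ∀ y : LinearMap.range j, j (e.symm y) = y := fun y =>
    LinearEquiv.ofInjective_symm_apply (f := j) y
  simp only [LinearMap.comp_apply, coindRho]
  exact h1 _

lemma counit_Psi (N : Comod K D) :
    (TensorProduct.rid K (N.carrier ⊗[K] C)).toLinearMap ∘ₗ
      LinearMap.lTensor (N.carrier ⊗[K] C) (Coalgebra.counit (R := K) (A := C)) ∘ₗ Psi N =
    LinearMap.id := by
  apply TensorProduct.ext'
  intro n c
  have r := ℛ K c
  have key := congrArg (TensorProduct.rid K C) (Coalgebra.sum_tmul_counit_eq r)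
  simp only [map_sum, TensorProduct.rid_tmul, one_smul] at key
  simp only [LinearMap.comp_apply, Psi_tmul N n c r, map_sum, LinearMap.lTensor_tmul,
    LinearEquiv.coe_coe, TensorProduct.rid_tmul, LinearMap.id_apply]
  calc ∑ i ∈ r.index, Coalgebra.counit (R := K) (r.right i) • (n ⊗ₜ[K] r.left i)
      = n ⊗ₜ[K] (∑ i ∈ r.index, Coalgebra.counit (R := K) (r.right i) • r.left i) := by
        rw [TensorProduct.tmul_sum]
        exact Finset.sum_congr rfl fun i _ => (TensorProduct.tmul_smul _ _ _).symm
    _ = n ⊗ₜ[K] c := by rw [key]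

lemma assoc_rTensorPsi_Psi (N : Comod K D) :
    (TensorProduct.assoc K (N.carrier ⊗[K] C) C C).toLinearMap ∘ₗ
        LinearMap.rTensor C (Psi N) ∘ₗ Psi N =
      LinearMap.lTensor (N.carrier ⊗[K] C) (Coalgebra.comul (R := K) (A := C)) ∘ₗ Psi N := by
  apply TensorProduct.ext'
  intro n c
  have r := ℛ K c
  have r1 : ∀ i, Coalgebra.Repr K (r.left i) (C × C) := fun i => ℛ K (r.left i)
  have r2 : ∀ i, Coalgebra.Repr K (r.right i) (C × C) := fun i => ℛ K (r.right i)
  have key := congrArg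
    (LinearMap.rTensor (C ⊗[K] C) (TensorProduct.mk K N.carrier C n))
    (Coalgebra.sum_tmul_tmul_eq r r1 r2)
  simp only [map_sum, LinearMap.rTensor_tmul, TensorProduct.mk_apply] at key
  simp only [LinearMap.comp_apply, Psi_tmul N n c r, map_sum, LinearMap.rTensor_tmul,
    LinearMap.lTensor_tmul, LinearEquiv.coe_coe]
  have hl : ∑ i ∈ r.index,
        (TensorProduct.assoc K (N.carrier ⊗[K] C) C C) ((Psi N (n ⊗ₜ[K] r.left i)) ⊗ₜ[K] r.right i) =
      ∑ i ∈ r.index, ∑ j ∈ (r1 i).index,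
        (n ⊗ₜ[K] (r1 i).left j) ⊗ₜ[K] ((r1 i).right j ⊗ₜ[K] r.right i) := by
    refine Finset.sum_congr rfl fun i _ => ?_
    rw [Psi_tmul N n (r.left i) (r1 i), TensorProduct.sum_tmul, map_sum]
    simp
  have hr : ∑ i ∈ r.index,
        (n ⊗ₜ[K] r.left i) ⊗ₜ[K] (Coalgebra.comul (R := K) (r.right i)) =
      ∑ i ∈ r.index, ∑ j ∈ (r2 i).index,
        (n ⊗ₜ[K] r.left i) ⊗ₜ[K] ((r2 i).left j ⊗ₜ[K] (r2 i).right j) := by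
    refine Finset.sum_congr rfl fun i _ => ?_
    rw [← (r2 i).eq, TensorProduct.tmul_sum]
  rw [hl, hr, key]

lemma coindRho_counit (N : Comod K D) :
    (TensorProduct.rid K ↥(cotensor α N)).toLinearMap ∘ₗ
      LinearMap.lTensor ↥(cotensor α N) (Coalgebra.counit (R := K) (A := C)) ∘ₗ coindRho α N =
    LinearMap.id := by
  apply sub_ext (p := cotensor α N)
  ext v
  simp only [LinearMap.comp_apply, LinearMap.id_apply, Submodule.subtype_apply]
  have e1 := LinearMap.congr_fun (rid_natural (cotensor α N).subtype)
    (LinearMap.lTensor ↥(cotensor α N) (Coalgebra.counit (R := K) (A := C)) (coindRho α N v))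
  simp only [LinearMap.comp_apply, Submodule.subtype_apply] at e1
  rw [e1]
  have e2 : LinearMap.rTensor K (cotensor α N).subtype ∘ₗ
      LinearMap.lTensor ↥(cotensor α N) (Coalgebra.counit (R := K) (A := C)) =
      LinearMap.lTensor (N.carrier ⊗[K] C) (Coalgebra.counit (R := K) (A := C)) ∘ₗ
        LinearMap.rTensor C (cotensor α N).subtype := by
    rw [LinearMap.rTensor_comp_lTensor, lTensor_comp_rTensor]
  have e2' := LinearMap.congr_fun e2 (coindRho α N v)
  simp only [LinearMap.comp_apply] at e2'
  rw [e2']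
  have e3 := LinearMap.congr_fun (rTensor_subtype_coindRho α N) v
  simp only [LinearMap.comp_apply] at e3
  rw [e3]
  have e4 := LinearMap.congr_fun (counit_Psi N) ((cotensor α N).subtype v)
  simp only [LinearMap.comp_apply, LinearMap.id_apply] at e4
  exact e4

lemma coindRho_coassoc (N : Comod K D) :
    (TensorProduct.assoc K ↥(cotensor α N) C C).toLinearMap ∘ₗ
        LinearMap.rTensor C (coindRho α N) ∘ₗ coindRho α N =
      LinearMap.lTensor ↥(cotensor α N) (Coalgebra.comul (R := K) (A := C)) ∘ₗ coindRho α N := by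
  apply rTensor_sub_ext (p := cotensor α N) (V := C ⊗[K] C)
  ext v
  simp only [LinearMap.comp_apply]
  have e1 := LinearMap.congr_fun (assoc_rTensor_rTensor
      (B := C) (V := C) (cotensor α N).subtype)
    (LinearMap.rTensor C (coindRho α N) (coindRho α N v))
  simp only [LinearMap.comp_apply] at e1
  rw [← e1]
  have e2 : LinearMap.rTensor C (LinearMap.rTensor C (cotensor α N).subtype) ∘ₗ
      LinearMap.rTensor C (coindRho α N) =
      LinearMap.rTensor C (Psi N) ∘ₗ LinearMap.rTensor C (cotensor α N).subtype := by
    rw [← LinearMap.rTensor_comp, rTensor_subtype_coindRho, LinearMap.rTensor_comp]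
  have e2' := LinearMap.congr_fun e2 (coindRho α N v)
  simp only [LinearMap.comp_apply] at e2'
  rw [e2']
  have e3 := LinearMap.congr_fun (rTensor_subtype_coindRho α N) v
  simp only [LinearMap.comp_apply] at e3
  rw [e3]
  have e4 := LinearMap.congr_fun (assoc_rTensorPsi_Psi N) ((cotensor α N).subtype v)
  simp only [LinearMap.comp_apply] at e4
  rw [e4]
  have e5 : LinearMap.rTensor (C ⊗[K] C) (cotensor α N).subtype ∘ₗ
      LinearMap.lTensor ↥(cotensor α N) (Coalgebra.comul (R := K) (A := C)) =
      LinearMap.lTensor (N.carrier ⊗[K] C) (Coalgebra.comul (R := K) (A := C)) ∘ₗ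
        LinearMap.rTensor C (cotensor α N).subtype := by
    rw [LinearMap.rTensor_comp_lTensor, lTensor_comp_rTensor]
  have e5' := LinearMap.congr_fun e5 (coindRho α N v)
  simp only [LinearMap.comp_apply] at e5'
  rw [e5', e3]

/-- The coinduced comodule `N □_D C`. -/
abbrev coindObj (N : Comod K D) : Comod K C where
  carrier := ↥(cotensor α N)
  ρ := coindRho α N
  counit_comp' := coindRho_counit α N
  coassoc' := coindRho_coassoc α N

lemma Psi_natural (N N' : Comod K D) (f : N.carrier →ₗ[K] N'.carrier) :
    Psi N' ∘ₗ LinearMap.rTensor C f =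
      LinearMap.rTensor C (LinearMap.rTensor C f) ∘ₗ Psi N := by
  apply TensorProduct.ext'
  intro n c
  have r := ℛ K c
  simp only [LinearMap.comp_apply, LinearMap.rTensor_tmul, Psi_tmul N' (f n) c r,
    Psi_tmul N n c r, map_sum, LinearMap.rTensor_tmul]

lemma theta_natural (N N' : Comod K D) (f : N ⟶ N') :
    theta α N' ∘ₗ LinearMap.rTensor C f.f =
      LinearMap.rTensor (D ⊗[K] C) f.f ∘ₗ theta α N := by
  apply TensorProduct.ext'
  intro n c
  simp only [LinearMap.comp_apply, theta, LinearMap.sub_apply, LinearMap.rTensor_tmul,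
    LinearMap.lTensor_tmul, LinearEquiv.coe_coe, map_sub]
  have hf : N'.ρ (f.f n) = LinearMap.rTensor D f.f (N.ρ n) := LinearMap.congr_fun f.compat n
  rw [hf]
  congr 1
  · generalize N.ρ n = s
    induction s using TensorProduct.induction_on with
    | zero => simp
    | tmul a b => simp
    | add s t hs ht => simp only [map_add, TensorProduct.add_tmul, hs, ht]

lemma mapsTo_cotensor (N N' : Comod K D) (f : N ⟶ N') (v : N.carrier ⊗[K] C)
    (hv : v ∈ cotensor α N) : LinearMap.rTensor C f.f v ∈ cotensor α N' := by
  rw [cotensor_eq_ker, LinearMap.mem_ker] at hv ⊢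
  have h := LinearMap.congr_fun (theta_natural α N N' f) v
  simp only [LinearMap.comp_apply] at h
  rw [h, hv, map_zero]

/-- The coinduction functor on morphisms. -/
def coindMap (N N' : Comod K D) (f : N ⟶ N') : coindObj α N ⟶ coindObj α N' where
  f := LinearMap.codRestrict (cotensor α N')
    (LinearMap.rTensor C f.f ∘ₗ (cotensor α N).subtype)
    (fun v => mapsTo_cotensor α N N' f _ v.2)
  compat := by
    show coindRho α N' ∘ₗ _ = _
    apply rTensor_sub_ext (p := cotensor α N') (V := C)
    rw [← LinearMap.comp_assoc, rTensor_subtype_coindRho, LinearMap.comp_assoc,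
      LinearMap.subtype_comp_codRestrict, ← LinearMap.comp_assoc, Psi_natural N N' f.f,
      LinearMap.comp_assoc, ← rTensor_subtype_coindRho α N, ← LinearMap.comp_assoc,
      ← LinearMap.rTensor_comp, ← LinearMap.comp_assoc, ← LinearMap.rTensor_comp,
      LinearMap.subtype_comp_codRestrict]

/-- The coinduction functor `N ↦ N □_D C`. -/
def coind : Comod K D ⥤ Comod K C where
  obj := coindObj α
  map {N N'} f := coindMap α N N' f
  map_id N := by
    apply ComodHom.ext
    apply sub_ext (p := cotensor α N)
    erw [ComodHom.id_f, LinearMap.comp_id]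
    show (cotensor α N).subtype ∘ₗ LinearMap.codRestrict _ _ _ = _
    rw [LinearMap.subtype_comp_codRestrict]
    show LinearMap.rTensor C (𝟙 N : N ⟶ N).f ∘ₗ _ = _
    rw [ComodHom.id_f, LinearMap.rTensor_id, LinearMap.id_comp]
  map_comp {N N' N''} f g := by
    apply ComodHom.ext
    apply sub_ext (p := cotensor α N'')
    show (cotensor α N'').subtype ∘ₗ LinearMap.codRestrict _ _ _ = _
    rw [LinearMap.subtype_comp_codRestrict]
    show _ = (cotensor α N'').subtype ∘ₗ
      (LinearMap.codRestrict _ _ _ ∘ₗ LinearMap.codRestrict _ _ _)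
    erw [← LinearMap.comp_assoc, LinearMap.subtype_comp_codRestrict, LinearMap.comp_assoc,
      LinearMap.subtype_comp_codRestrict, ComodHom.comp_f, LinearMap.rTensor_comp,
      LinearMap.comp_assoc]

/-- unit membership -/
lemma theta_comp_rho (M : Comod K C) :
    theta α ((cores α).obj M) ∘ₗ M.ρ = 0 := by
  have key : ((TensorProduct.assoc K M.carrier D C).toLinearMap ∘ₗ
      LinearMap.rTensor C (coresρ α M)) ∘ₗ M.ρ =
      LinearMap.lTensor M.carrier (lcoaction α) ∘ₗ M.ρ := by
    calc ((TensorProduct.assoc K M.carrier D C).toLinearMap ∘ₗ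
        LinearMap.rTensor C (coresρ α M)) ∘ₗ M.ρ
        = ((TensorProduct.assoc K M.carrier D C).toLinearMap ∘ₗ
            (LinearMap.rTensor C (LinearMap.lTensor M.carrier α.toLinearMap) ∘ₗ
              LinearMap.rTensor C M.ρ)) ∘ₗ M.ρ := by
          rw [coresρ, LinearMap.rTensor_comp]
      _ = (((TensorProduct.assoc K M.carrier D C).toLinearMap ∘ₗ
            LinearMap.rTensor C (LinearMap.lTensor M.carrier α.toLinearMap)) ∘ₗ
              LinearMap.rTensor C M.ρ) ∘ₗ M.ρ := by
          simp only [LinearMap.comp_assoc]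
      _ = ((LinearMap.lTensor M.carrier (LinearMap.rTensor C α.toLinearMap) ∘ₗ
            (TensorProduct.assoc K M.carrier C C).toLinearMap) ∘ₗ
              LinearMap.rTensor C M.ρ) ∘ₗ M.ρ := by
          rw [assoc_rTensor_lTensor]
      _ = LinearMap.lTensor M.carrier (LinearMap.rTensor C α.toLinearMap) ∘ₗ
            (TensorProduct.assoc K M.carrier C C).toLinearMap ∘ₗ
              LinearMap.rTensor C M.ρ ∘ₗ M.ρ := by
          simp only [LinearMap.comp_assoc]
      _ = LinearMap.lTensor M.carrier (LinearMap.rTensor C α.toLinearMap) ∘ₗ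
            LinearMap.lTensor M.carrier (Coalgebra.comul (R := K) (A := C)) ∘ₗ M.ρ := by
          rw [M.coassoc']
      _ = LinearMap.lTensor M.carrier (lcoaction α) ∘ₗ M.ρ := by
          rw [← LinearMap.comp_assoc, ← LinearMap.lTensor_comp, lcoaction]
  have h : theta α ((cores α).obj M) ∘ₗ M.ρ =
      ((TensorProduct.assoc K M.carrier D C).toLinearMap ∘ₗ
        LinearMap.rTensor C (coresρ α M)) ∘ₗ M.ρ -
      LinearMap.lTensor M.carrier (lcoaction α) ∘ₗ M.ρ := rfl
  rw [h, key]
  exact sub_self (LinearMap.lTensor M.carrier (lcoaction α) ∘ₗ M.ρ)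

lemma Psi_comp_rho (M : Comod K C) :
    Psi ((cores α).obj M) ∘ₗ M.ρ = LinearMap.rTensor C M.ρ ∘ₗ M.ρ := by
  show (TensorProduct.assoc K M.carrier C C).symm.toLinearMap ∘ₗ
      LinearMap.lTensor M.carrier (Coalgebra.comul (R := K) (A := C)) ∘ₗ M.ρ = _
  rw [← M.coassoc', ← LinearMap.comp_assoc]
  ext v
  simp

/-- The unit of the adjunction. -/
def unitHom (M : Comod K C) : M ⟶ (coind α).obj ((cores α).obj M) where
  f := LinearMap.codRestrict (cotensor α ((cores α).obj M)) M.ρ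
    (fun m => by
      have h := LinearMap.congr_fun (theta_comp_rho α M) m
      exact h)
  compat := by
    show coindRho α ((cores α).obj M) ∘ₗ _ = _
    apply rTensor_sub_ext (p := cotensor α ((cores α).obj M)) (V := C)
    erw [← LinearMap.comp_assoc, rTensor_subtype_coindRho, LinearMap.comp_assoc,
      LinearMap.subtype_comp_codRestrict, Psi_comp_rho, ← LinearMap.comp_assoc,
      ← LinearMap.rTensor_comp, LinearMap.subtype_comp_codRestrict]
    rfl

/-- The underlying map of the counit. -/
def eps (N : Comod K D) : N.carrier ⊗[K] C →ₗ[K] N.carrier :=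
  (TensorProduct.rid K N.carrier).toLinearMap ∘ₗ
    LinearMap.lTensor N.carrier (Coalgebra.counit (R := K) (A := C))

lemma eps_tmul (N : Comod K D) (n : N.carrier) (c : C) :
    eps N (n ⊗ₜ[K] c) = Coalgebra.counit (R := K) c • n := by
  simp [eps]

/-- the "kill C with counit" map on the middle factor -/
def uMap (N : Comod K D) : N.carrier ⊗[K] (D ⊗[K] C) →ₗ[K] N.carrier ⊗[K] D :=
  LinearMap.lTensor N.carrier
    ((TensorProduct.rid K D).toLinearMap ∘ₗ
      LinearMap.lTensor D (Coalgebra.counit (R := K) (A := C)))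

lemma E1 (N : Comod K D) :
    N.ρ ∘ₗ eps N =
      uMap N ∘ₗ (TensorProduct.assoc K N.carrier D C).toLinearMap ∘ₗ
        LinearMap.rTensor C N.ρ := by
  apply TensorProduct.ext'
  intro n c
  simp only [LinearMap.comp_apply, eps_tmul, map_smul, LinearMap.rTensor_tmul,
    LinearEquiv.coe_coe]
  generalize N.ρ n = s
  induction s using TensorProduct.induction_on with
  | zero => simp
  | tmul a b => simp [uMap, TensorProduct.smul_tmul', TensorProduct.tmul_smul]
  | add s t hs ht => simp only [smul_add, map_add, TensorProduct.add_tmul, hs, ht]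

lemma E3 (N : Comod K D) :
    TensorProduct.map (eps N) α.toLinearMap ∘ₗ Psi N =
      uMap N ∘ₗ LinearMap.lTensor N.carrier (lcoaction α) := by
  apply TensorProduct.ext'
  intro n c
  have r := ℛ K c
  have key1 := congrArg (TensorProduct.lid K C) (Coalgebra.sum_counit_tmul_eq r)
  simp only [map_sum, TensorProduct.lid_tmul, one_smul] at key1
  have key2 := congrArg (TensorProduct.rid K C) (Coalgebra.sum_tmul_counit_eq r)
  simp only [map_sum, TensorProduct.rid_tmul, one_smul] at key2
  simp only [LinearMap.comp_apply, Psi_tmul N n c r, map_sum, TensorProduct.map_tmul,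
    eps_tmul, LinearMap.lTensor_tmul]
  have hlhs : ∑ i ∈ r.index,
        (Coalgebra.counit (R := K) (r.left i) • n) ⊗ₜ[K] α.toLinearMap (r.right i) =
      n ⊗ₜ[K] α.toLinearMap c := by
    calc ∑ i ∈ r.index,
          (Coalgebra.counit (R := K) (r.left i) • n) ⊗ₜ[K] α.toLinearMap (r.right i)
        = n ⊗ₜ[K] α.toLinearMap
            (∑ i ∈ r.index, Coalgebra.counit (R := K) (r.left i) • r.right i) := by
          rw [map_sum, TensorProduct.tmul_sum]
          exact Finset.sum_congr rfl fun i _ => by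
            rw [map_smul, TensorProduct.smul_tmul]
      _ = n ⊗ₜ[K] α.toLinearMap c := by rw [key1]
  rw [hlhs]
  rw [lcoaction, LinearMap.comp_apply, ← r.eq, map_sum]
  simp only [LinearMap.rTensor_tmul, TensorProduct.tmul_sum, map_sum, uMap,
    LinearMap.lTensor_tmul, LinearMap.comp_apply, LinearEquiv.coe_coe, TensorProduct.rid_tmul]
  calc n ⊗ₜ[K] α.toLinearMap c
      = n ⊗ₜ[K] α.toLinearMap
          (∑ i ∈ r.index, Coalgebra.counit (R := K) (r.right i) • r.left i) := by rw [key2]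
    _ = ∑ i ∈ r.index,
          n ⊗ₜ[K] (Coalgebra.counit (R := K) (r.right i) • α.toLinearMap (r.left i)) := by
        rw [map_sum, TensorProduct.tmul_sum]
        exact Finset.sum_congr rfl fun i _ => by rw [map_smul]

lemma E4 (N : Comod K D) :
    LinearMap.rTensor C (eps N) ∘ₗ Psi N = LinearMap.id := by
  apply TensorProduct.ext'
  intro n c
  have r := ℛ K c
  have key1 := congrArg (TensorProduct.lid K C) (Coalgebra.sum_counit_tmul_eq r)
  simp only [map_sum, TensorProduct.lid_tmul, one_smul] at key1
  simp only [LinearMap.comp_apply, Psi_tmul N n c r, map_sum, LinearMap.rTensor_tmul,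
    eps_tmul, LinearMap.id_apply]
  calc ∑ i ∈ r.index, (Coalgebra.counit (R := K) (r.left i) • n) ⊗ₜ[K] r.right i
      = n ⊗ₜ[K] (∑ i ∈ r.index, Coalgebra.counit (R := K) (r.left i) • r.right i) := by
        rw [TensorProduct.tmul_sum]
        exact Finset.sum_congr rfl fun i _ => by rw [TensorProduct.smul_tmul]
    _ = n ⊗ₜ[K] c := by rw [key1]

lemma eps_natural (N N' : Comod K D) (f : N.carrier →ₗ[K] N'.carrier) :
    eps N' ∘ₗ LinearMap.rTensor C f = f ∘ₗ eps N := by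
  apply TensorProduct.ext'
  intro n c
  simp [eps_tmul]

/-- The counit of the adjunction. -/
def counitHom (N : Comod K D) : (cores α).obj ((coind α).obj N) ⟶ N where
  f := eps N ∘ₗ (cotensor α N).subtype
  compat := by
    show N.ρ ∘ₗ (eps N ∘ₗ (cotensor α N).subtype) =
      LinearMap.rTensor D (eps N ∘ₗ (cotensor α N).subtype) ∘ₗ
        LinearMap.lTensor ↥(cotensor α N) α.toLinearMap ∘ₗ coindRho α N
    have hE2 : LinearMap.rTensor D (eps N ∘ₗ (cotensor α N).subtype) ∘ₗ
        LinearMap.lTensor ↥(cotensor α N) α.toLinearMap =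
        TensorProduct.map (eps N) α.toLinearMap ∘ₗ
          LinearMap.rTensor C (cotensor α N).subtype := by
      apply TensorProduct.ext'
      intro v c
      simp
    calc N.ρ ∘ₗ (eps N ∘ₗ (cotensor α N).subtype)
        = (N.ρ ∘ₗ eps N) ∘ₗ (cotensor α N).subtype := by rw [LinearMap.comp_assoc]
      _ = (uMap N ∘ₗ (TensorProduct.assoc K N.carrier D C).toLinearMap ∘ₗ
            LinearMap.rTensor C N.ρ) ∘ₗ (cotensor α N).subtype := by rw [E1]
      _ = uMap N ∘ₗ ((TensorProduct.assoc K N.carrier D C).toLinearMap ∘ₗ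
            LinearMap.rTensor C N.ρ) ∘ₗ (cotensor α N).subtype := by
          simp only [LinearMap.comp_assoc]
      _ = uMap N ∘ₗ LinearMap.lTensor N.carrier (lcoaction α) ∘ₗ
            (cotensor α N).subtype := by rw [T1_subtype_eq_T2]
      _ = (uMap N ∘ₗ LinearMap.lTensor N.carrier (lcoaction α)) ∘ₗ
            (cotensor α N).subtype := by rw [LinearMap.comp_assoc]
      _ = (TensorProduct.map (eps N) α.toLinearMap ∘ₗ Psi N) ∘ₗ
            (cotensor α N).subtype := by rw [E3]
      _ = TensorProduct.map (eps N) α.toLinearMap ∘ₗ Psi N ∘ₗ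
            (cotensor α N).subtype := by rw [LinearMap.comp_assoc]
      _ = TensorProduct.map (eps N) α.toLinearMap ∘ₗ
            LinearMap.rTensor C (cotensor α N).subtype ∘ₗ coindRho α N := by
          rw [rTensor_subtype_coindRho]
      _ = (TensorProduct.map (eps N) α.toLinearMap ∘ₗ
            LinearMap.rTensor C (cotensor α N).subtype) ∘ₗ coindRho α N := by
          rw [LinearMap.comp_assoc]
      _ = (LinearMap.rTensor D (eps N ∘ₗ (cotensor α N).subtype) ∘ₗ
            LinearMap.lTensor ↥(cotensor α N) α.toLinearMap) ∘ₗ coindRho α N := by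
          rw [hE2]
      _ = LinearMap.rTensor D (eps N ∘ₗ (cotensor α N).subtype) ∘ₗ
            LinearMap.lTensor ↥(cotensor α N) α.toLinearMap ∘ₗ coindRho α N := by
          rw [LinearMap.comp_assoc]

end Aux

/-- the corestriction functor along a coalgebra morphism `α : C → D` is left
adjoint to a coinduction functor whose underlying modules are the cotensor products `N □_D C`. -/
theorem corestriction_left_adjoint_of_coinduction
    {K : Type u} [Field K] {C D : Type u}
    [AddCommGroup C] [Module K C] [Coalgebra K C]
    [AddCommGroup D] [Module K D] [Coalgebra K D] (α : C →ₗc[K] D) :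
    ∃ G : Comod K D ⥤ Comod K C,
      (∀ N : Comod K D, (G.obj N).carrier = ↥(cotensor α N)) ∧
      Nonempty (cores α ⊣ G) := by
  refine ⟨coind α, fun N => rfl, ⟨?_⟩⟩
  refine
    { unit :=
        { app := fun M => unitHom α M
          naturality := fun M M' f => by
            apply ComodHom.ext
            rw [ComodHom.comp_f, ComodHom.comp_f]
            apply sub_ext (p := cotensor α ((cores α).obj M'))
            erw [← LinearMap.comp_assoc, ← LinearMap.comp_assoc]
            rw [show (cotensor α ((cores α).obj M')).subtype ∘ₗ (unitHom α M').f = M'.ρ from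
              LinearMap.subtype_comp_codRestrict _ _ _]
            rw [show (cotensor α ((cores α).obj M')).subtype ∘ₗ
                ((cores α ⋙ coind α).map f).f =
                LinearMap.rTensor C f.f ∘ₗ (cotensor α ((cores α).obj M)).subtype from
              LinearMap.subtype_comp_codRestrict _ _ _]
            erw [LinearMap.comp_assoc,
              show (cotensor α ((cores α).obj M)).subtype ∘ₗ (unitHom α M).f = M.ρ from
                LinearMap.subtype_comp_codRestrict _ _ _]
            exact f.compat }
      counit :=
        { app := fun N => counitHom α N
          naturality := fun N N' f => by
            apply ComodHom.ext
            rw [ComodHom.comp_f, ComodHom.comp_f]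
            show (counitHom α N').f ∘ₗ (coindMap α N N' f).f = f.f ∘ₗ (counitHom α N).f
            show (eps N' ∘ₗ (cotensor α N').subtype) ∘ₗ (coindMap α N N' f).f =
              f.f ∘ₗ eps N ∘ₗ (cotensor α N).subtype
            erw [LinearMap.comp_assoc,
              show (cotensor α N').subtype ∘ₗ (coindMap α N N' f).f =
                LinearMap.rTensor C f.f ∘ₗ (cotensor α N).subtype from
                LinearMap.subtype_comp_codRestrict _ _ _,
              ← LinearMap.comp_assoc, eps_natural N N' f.f, LinearMap.comp_assoc] }
      left_triangle_components := fun M => by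
        apply ComodHom.ext
        rw [ComodHom.comp_f, ComodHom.id_f]
        show (counitHom α ((cores α).obj M)).f ∘ₗ (unitHom α M).f = LinearMap.id
        show (eps ((cores α).obj M) ∘ₗ (cotensor α ((cores α).obj M)).subtype) ∘ₗ
          (unitHom α M).f = LinearMap.id
        erw [LinearMap.comp_assoc,
          show (cotensor α ((cores α).obj M)).subtype ∘ₗ (unitHom α M).f = M.ρ from
            LinearMap.subtype_comp_codRestrict _ _ _]
        show ((TensorProduct.rid K M.carrier).toLinearMap ∘ₗ
          LinearMap.lTensor M.carrier (Coalgebra.counit (R := K) (A := C))) ∘ₗ M.ρ =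
          LinearMap.id
        rw [LinearMap.comp_assoc]
        exact M.counit_comp'
      right_triangle_components := fun N => by
        apply ComodHom.ext
        rw [ComodHom.comp_f, ComodHom.id_f]
        apply sub_ext (p := cotensor α N)
        erw [LinearMap.comp_id, ← LinearMap.comp_assoc]
        rw [show (cotensor α N).subtype ∘ₗ
            ((coind α).map (counitHom α N)).f =
            LinearMap.rTensor C (counitHom α N).f ∘ₗ
              (cotensor α ((cores α).obj ((coind α).obj N))).subtype from
          LinearMap.subtype_comp_codRestrict _ _ _]
        erw [LinearMap.comp_assoc,
          show (cotensor α ((cores α).obj ((coind α).obj N))).subtype ∘ₗ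
            (unitHom α ((coind α).obj N)).f = coindRho α N from
            LinearMap.subtype_comp_codRestrict _ _ _]
        show LinearMap.rTensor C (eps N ∘ₗ (cotensor α N).subtype) ∘ₗ coindRho α N =
          (cotensor α N).subtype
        rw [LinearMap.rTensor_comp, LinearMap.comp_assoc, rTensor_subtype_coindRho,
          ← LinearMap.comp_assoc, E4, LinearMap.id_comp] }

end Formal
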